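/- arXiv:2209.08544 — 2 statements merged into one kernel-verified Lean document; each statement's English description precedes it below -/
import Mathlib

section
/- Assume γ ≥ α ≥ β. Then the maximum of T₂ over the interval [0, α/2] equals α/2 + max{γ, α/2 + β} (attained at x = 0 when γ ≥ α/2 + β and at x = α/2 when γ ≤ α/2 + β), and the minimum of T₂ over [0, α/2] equals max{ (α + β + γ)/2, ((α + γ)² − β² + 4·√3·τ)/(4·γ) }. -/
/-!
Put `A = (0, 0)`, `B = (γ, 0)` and `C = (p, h)` with `h = 2τ/γ ≥ 0`. Then `CR₁(x)` is the distance
from `C` to the point `(γ - 2x, 0)`, so `x ↦ x + CR₁(x)` is convex and the maximum of `T₂` on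
`[0, α/2]` is taken at an endpoint.

For the minimum, `T₂(x) ≥ α/2 + x + max(β, γ - 2x) ≥ (α + β + γ)/2`, and projecting onto the unit
vector `(1/2, √3/2)` gives `CR₁(x) ≥ (γ - 2x - p + √3 h)/2`, i.e. `T₂(x) ≥ α/2 + (γ - p + √3 h)/2`.
If the angle at `A` is at most 60° the first bound is the larger one and is attained at
`x = (γ - β)/2`; otherwise the second is, attained where the segment from `C` meets `AB` at 60°.
-/

open Set

noncomputable section

/-- `AR₂(x) = √(β² + (2x − γ)² − 2β(2x − γ)·cos C)`, where
`cos C = (α² + β² − γ²)/(2αβ)` by the Cosine Law. -/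
def AR2 (α β γ : ℝ) (x : ℝ) : ℝ :=
  Real.sqrt (β ^ 2 + (2 * x - γ) ^ 2
    - 2 * β * (2 * x - γ) * ((α ^ 2 + β ^ 2 - γ ^ 2) / (2 * α * β)))

/-- `CR₁(x) = √(β² + (γ − 2x)² − 2β(γ − 2x)·cos A)`, where
`cos A = (β² + γ² − α²)/(2βγ)` by the Cosine Law. -/
def CR1 (α β γ : ℝ) (x : ℝ) : ℝ :=
  Real.sqrt (β ^ 2 + (γ - 2 * x) ^ 2
    - 2 * β * (γ - 2 * x) * ((β ^ 2 + γ ^ 2 - α ^ 2) / (2 * β * γ)))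

/-- Worst-case evacuation cost of OppositeSearch in Configuration 1. -/
def T1 (α β γ : ℝ) (x : ℝ) : ℝ :=
  α / 2 + γ - x + max (AR2 α β γ x) (max β (2 * x - γ))

/-- Worst-case evacuation cost of OppositeSearch in Configuration 2. -/
def T2 (α β γ : ℝ) (x : ℝ) : ℝ :=
  α / 2 + x + max (CR1 α β γ x) (max β (γ - 2 * x))

open Real

lemma add_sqrt_three_mul_le_two_mul_sqrt (d h : ℝ) : d + √3 * h ≤ 2 * √(d ^ 2 + h ^ 2) := by
  have hsq3 : √3 ^ 2 = 3 := sq_sqrt (by norm_num)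
  rw [← sqrt_sq zero_le_two, ← sqrt_mul (by norm_num)]
  refine le_trans (le_abs_self _) (abs_le_sqrt ?_)
  nlinarith [sq_nonneg (√3 * d - h)]

lemma convexOn_sqrt_sub_mul_sq_add_sq (a b h : ℝ) :
    ConvexOn ℝ univ (fun x : ℝ => √((a - b * x) ^ 2 + h ^ 2)) := by
  have hnorm : (fun x : ℝ => √((a - b * x) ^ 2 + h ^ 2)) =
      (‖·‖) ∘ AffineMap.lineMap ((a : ℂ) + h * Complex.I) ((a - b : ℝ) + h * Complex.I) := by
    ext x
    rw [Function.comp_apply, AffineMap.lineMap_apply, vsub_eq_sub, vadd_eq_add, Complex.real_smul,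
      ← Complex.norm_add_mul_I]
    congr 1
    push_cast
    ring
  rw [hnorm]
  exact convexOn_univ_norm.comp_affineMap _

/-- `(p, h)` are the coordinates of the vertex `C` when `A = (0, 0)` and `B = (γ, 0)`. -/
structure IsApexCoords (α β γ p h : ℝ) : Prop where
  sq_dist_A : p ^ 2 + h ^ 2 = β ^ 2
  sq_dist_B : (γ - p) ^ 2 + h ^ 2 = α ^ 2
  height_nonneg : 0 ≤ h

section IsApexCoords

variable {α β γ p h : ℝ}

lemma isApexCoords_of_triangle (hγ : 0 < γ) (h1 : α ≤ β + γ) (h2 : β ≤ α + γ)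
    (h3 : γ ≤ α + β) :
    IsApexCoords α β γ ((β ^ 2 + γ ^ 2 - α ^ 2) / (2 * γ))
      (√((α + β + γ) * (-α + β + γ) * (α - β + γ) * (α + β - γ)) / (2 * γ)) := by
  have hP : 0 ≤ (α + β + γ) * (-α + β + γ) * (α - β + γ) * (α + β - γ) := by
    apply mul_nonneg (mul_nonneg (mul_nonneg _ _) _) _ <;> linarith
  have hsqrt := sq_sqrt hP
  constructor
  · field_simp
    linear_combination hsqrt
  · field_simp
    linear_combination hsqrt
  · positivity

lemma IsApexCoords.two_mul_mul_eq (hC : IsApexCoords α β γ p h) :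
    2 * γ * p = β ^ 2 + γ ^ 2 - α ^ 2 := by
  linear_combination hC.sq_dist_A - hC.sq_dist_B

lemma IsApexCoords.CR1_eq (hC : IsApexCoords α β γ p h) (hβ : β ≠ 0) (hγ : γ ≠ 0) (x : ℝ) :
    CR1 α β γ x = √((γ - p - 2 * x) ^ 2 + h ^ 2) := by
  rw [CR1]
  congr 1
  field_simp
  linear_combination (γ - 2 * x) * hC.two_mul_mul_eq - γ * hC.sq_dist_A

lemma IsApexCoords.CR1_zero (hC : IsApexCoords α β γ p h) (hβ : β ≠ 0) (hγ : γ ≠ 0)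
    (hα : 0 ≤ α) : CR1 α β γ 0 = α := by
  rw [hC.CR1_eq hβ hγ, mul_zero, sub_zero, hC.sq_dist_B, sqrt_sq hα]

lemma IsApexCoords.CR1_half_le (hC : IsApexCoords α β γ p h) (hβ : 0 < β) (hγ : 0 < γ)
    (hα : 0 ≤ α) (hαγ : α ≤ γ) : CR1 α β γ (α / 2) ≤ β := by
  rw [hC.CR1_eq hβ.ne' hγ.ne', sqrt_le_left hβ.le, ← hC.sq_dist_A]
  have hfoot : γ - α ≤ 2 * p := by
    nlinarith [hC.two_mul_mul_eq, mul_nonneg hα (sub_nonneg.2 hαγ), sq_nonneg β]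
  nlinarith

lemma IsApexCoords.convexOn_add_CR1 (hC : IsApexCoords α β γ p h) (hβ : β ≠ 0) (hγ : γ ≠ 0) :
    ConvexOn ℝ univ (fun x => x + CR1 α β γ x) := by
  simp only [hC.CR1_eq hβ hγ]
  exact (convexOn_id convex_univ).add (convexOn_sqrt_sub_mul_sq_add_sq _ _ _)

lemma IsApexCoords.T2_zero (hC : IsApexCoords α β γ p h) (hβ : β ≠ 0) (hγ : γ ≠ 0)
    (hα : 0 ≤ α) (hαγ : α ≤ γ) (hβγ : β ≤ γ) : T2 α β γ 0 = α / 2 + γ := by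
  rw [T2, hC.CR1_zero hβ hγ hα, mul_zero, sub_zero, max_eq_right hβγ, max_eq_right hαγ,
    add_zero]

lemma IsApexCoords.T2_half (hC : IsApexCoords α β γ p h) (hβ : 0 < β) (hγ : 0 < γ)
    (hα : 0 ≤ α) (hαγ : α ≤ γ) (h3 : γ ≤ α + β) : T2 α β γ (α / 2) = α + β := by
  rw [T2, max_eq_left (by linarith : γ - 2 * (α / 2) ≤ β),
    max_eq_right (hC.CR1_half_le hβ hγ hα hαγ)]
  ring

lemma IsApexCoords.T2_le_of_mem_Icc (hC : IsApexCoords α β γ p h) (hβ : 0 < β) (hγ : 0 < γ)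
    (hα : 0 ≤ α) (hαγ : α ≤ γ) {x : ℝ} (hx : x ∈ Icc 0 (α / 2)) :
    T2 α β γ x ≤ α / 2 + max γ (α / 2 + β) := by
  have hconv := (hC.convexOn_add_CR1 hβ.ne' hγ.ne').le_max_of_mem_Icc (mem_univ 0)
    (mem_univ (α / 2)) hx
  simp only [hC.CR1_zero hβ.ne' hγ.ne' hα, zero_add] at hconv
  have hCR1 : x + CR1 α β γ x ≤ max γ (α / 2 + β) :=
    hconv.trans (max_le_max hαγ (by linarith [hC.CR1_half_le hβ hγ hα hαγ]))
  have hγM := le_max_left γ (α / 2 + β)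
  have hβM := le_max_right γ (α / 2 + β)
  have hmax : max (CR1 α β γ x) (max β (γ - 2 * x)) ≤ max γ (α / 2 + β) - x :=
    max_le (by linarith) (max_le (by linarith [hx.2]) (by linarith [hx.1]))
  rw [T2]
  linarith

lemma half_perimeter_le_T2 (α β γ x : ℝ) : (α + β + γ) / 2 ≤ T2 α β γ x := by
  have := le_max_right (CR1 α β γ x) (max β (γ - 2 * x))
  have := le_max_left β (γ - 2 * x)
  have := le_max_right β (γ - 2 * x)
  rw [T2]
  linarith

lemma IsApexCoords.le_T2 (hC : IsApexCoords α β γ p h) (hβ : β ≠ 0) (hγ : γ ≠ 0) (x : ℝ) :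
    α / 2 + (γ - p + √3 * h) / 2 ≤ T2 α β γ x := by
  have hCR1 := add_sqrt_three_mul_le_two_mul_sqrt (γ - p - 2 * x) h
  rw [← hC.CR1_eq hβ hγ] at hCR1
  have := le_max_left (CR1 α β γ x) (max β (γ - 2 * x))
  rw [T2]
  linarith

lemma IsApexCoords.sqrt_three_mul_sub_le (hC : IsApexCoords α β γ p h) (hβ : 0 ≤ β)
    (hA : h ≤ √3 * p) : √3 * h - p ≤ β := by
  have hsq3 : √3 ^ 2 = 3 := sq_sqrt (by norm_num)
  have hp : 0 ≤ p := by nlinarith [hC.height_nonneg, sqrt_nonneg 3]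
  refine le_of_sq_le_sq ?_ hβ
  nlinarith [hC.sq_dist_A, mul_nonneg hC.height_nonneg (sub_nonneg.2 hA)]

lemma IsApexCoords.le_sqrt_three_mul_sub (hC : IsApexCoords α β γ p h) (hp : 0 ≤ p)
    (hA : √3 * p ≤ h) : β ≤ √3 * h - p := by
  have hsq3 : √3 ^ 2 = 3 := sq_sqrt (by norm_num)
  have h3p : 3 * p ≤ √3 * h := by nlinarith [mul_le_mul_of_nonneg_left hA (sqrt_nonneg 3)]
  refine le_of_sq_le_sq ?_ (by linarith)
  nlinarith [hC.sq_dist_A, mul_nonneg hC.height_nonneg (sub_nonneg.2 hA)]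

lemma IsApexCoords.T2_eq_half_perimeter (hC : IsApexCoords α β γ p h) (hβ : 0 < β)
    (hγ : γ ≠ 0) (hA : h ≤ √3 * p) : T2 α β γ ((γ - β) / 2) = (α + β + γ) / 2 := by
  have hsq3 : √3 ^ 2 = 3 := sq_sqrt (by norm_num)
  have hp : 0 ≤ p := by nlinarith [hC.height_nonneg, sqrt_nonneg 3]
  have hfoot : β ≤ 2 * p := by
    refine le_of_sq_le_sq ?_ (by linarith)
    nlinarith [hC.sq_dist_A, mul_le_mul hA hA hC.height_nonneg (by positivity)]
  have hCR1 : CR1 α β γ ((γ - β) / 2) ≤ β := by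
    rw [hC.CR1_eq hβ.ne' hγ, sqrt_le_left hβ.le]
    nlinarith [hC.sq_dist_A]
  rw [T2, show γ - 2 * ((γ - β) / 2) = β by ring, max_self, max_eq_right hCR1]
  ring

lemma IsApexCoords.T2_eq_of_sqrt_three_mul_le (hC : IsApexCoords α β γ p h) (hβ : β ≠ 0)
    (hγ : γ ≠ 0) (hp : 0 ≤ p) (hA : √3 * p ≤ h) :
    T2 α β γ ((γ - p - √3 * h / 3) / 2) = α / 2 + (γ - p + √3 * h) / 2 := by
  have hsq3 : √3 ^ 2 = 3 := sq_sqrt (by norm_num)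
  have h3p : 3 * p ≤ √3 * h := by nlinarith [mul_le_mul_of_nonneg_left hA (sqrt_nonneg 3)]
  have hCR1 : CR1 α β γ ((γ - p - √3 * h / 3) / 2) = 2 * √3 * h / 3 := by
    rw [hC.CR1_eq hβ hγ, show γ - p - 2 * ((γ - p - √3 * h / 3) / 2) = √3 * h / 3 by ring,
      show (√3 * h / 3) ^ 2 + h ^ 2 = (2 * √3 * h / 3) ^ 2 by linear_combination (-h ^ 2 / 3) * hsq3,
      sqrt_sq (by have := hC.height_nonneg; positivity)]
  have hβCR1 : β ≤ 2 * √3 * h / 3 := by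
    refine le_of_sq_le_sq ?_ (by have := hC.height_nonneg; positivity)
    nlinarith [hC.sq_dist_A, mul_le_mul hA hA (by positivity) hC.height_nonneg]
  have hfoot : γ - 2 * ((γ - p - √3 * h / 3) / 2) ≤ 2 * √3 * h / 3 := by linarith
  rw [T2, hCR1, max_eq_left (max_le hβCR1 hfoot)]
  ring

lemma IsApexCoords.exists_T2_eq_max (hC : IsApexCoords α β γ p h) (hβ : 0 < β)
    (hβα : β ≤ α) (hαγ : α ≤ γ) (h3 : γ ≤ α + β) :
    ∃ x ∈ Icc 0 (α / 2), T2 α β γ x = max ((α + β + γ) / 2) (α / 2 + (γ - p + √3 * h) / 2) := by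
  have hγ : 0 < γ := by linarith
  have hp : 0 ≤ p := by nlinarith [hC.two_mul_mul_eq]
  rcases le_total h (√3 * p) with hA | hA
  · refine ⟨(γ - β) / 2, ⟨by linarith, by linarith⟩, ?_⟩
    rw [hC.T2_eq_half_perimeter hβ hγ.ne' hA,
      max_eq_left (by linarith [hC.sqrt_three_mul_sub_le hβ.le hA])]
  · have hsq3 : √3 ^ 2 = 3 := sq_sqrt (by norm_num)
    have hpγ : 2 * p ≤ γ := by nlinarith [hC.two_mul_mul_eq]
    have hfoot : √3 * h ≤ 3 * (γ - p) := by
      refine le_of_sq_le_sq ?_ (by linarith)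
      nlinarith [hC.sq_dist_A, pow_le_pow_left₀ hβ.le (hβα.trans hαγ) 2]
    have hγpα : γ - p ≤ α :=
      le_of_sq_le_sq (by nlinarith [hC.sq_dist_B, sq_nonneg h]) (by linarith)
    have hh := mul_nonneg (sqrt_nonneg 3) hC.height_nonneg
    refine ⟨(γ - p - √3 * h / 3) / 2, ⟨by linarith, by linarith⟩, ?_⟩
    rw [hC.T2_eq_of_sqrt_three_mul_le hβ.ne' hγ.ne' hp hA,
      max_eq_right (by linarith [hC.le_sqrt_three_mul_sub hp hA])]

end IsApexCoords

theorem stmt17_general (α β γ : ℝ) (hα : 0 < α) (hβ : 0 < β) (hγ : 0 < γ)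
    (h1 : α < β + γ) (h2 : β < α + γ) (h3 : γ < α + β)
    (hγα : α ≤ γ) (hαβ : β ≤ α)
    (τ : ℝ)
    (hτ : τ = (1/4) * Real.sqrt ((α + β + γ) * (-α + β + γ) * (α - β + γ) * (α + β - γ))) :
    IsGreatest (T2 α β γ '' Icc 0 (α / 2)) (α / 2 + max γ (α / 2 + β)) ∧
      (α / 2 + β ≤ γ → T2 α β γ 0 = α / 2 + max γ (α / 2 + β)) ∧
      (γ ≤ α / 2 + β → T2 α β γ (α / 2) = α / 2 + max γ (α / 2 + β)) ∧
      IsLeast (T2 α β γ '' Icc 0 (α / 2))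
        (max ((α + β + γ) / 2) (((α + γ) ^ 2 - β ^ 2 + 4 * Real.sqrt 3 * τ) / (4 * γ))) := by
  have hC := isApexCoords_of_triangle hγ h1.le h2.le h3.le
  set p := (β ^ 2 + γ ^ 2 - α ^ 2) / (2 * γ) with hp
  set h := √((α + β + γ) * (-α + β + γ) * (α - β + γ) * (α + β - γ)) / (2 * γ) with hh
  have hL : α / 2 + (γ - p + √3 * h) / 2 = ((α + γ) ^ 2 - β ^ 2 + 4 * √3 * τ) / (4 * γ) := by
    rw [hp, hh, hτ]; field_simp; ring
  have hT0 := hC.T2_zero hβ.ne' hγ.ne' hα.le hγα (hαβ.trans hγα)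
  have hThalf := hC.T2_half hβ hγ hα.le hγα h3.le
  refine ⟨⟨?_, ?_⟩, fun hγM ↦ ?_, fun hγM ↦ ?_, ⟨?_, ?_⟩⟩
  · rcases le_total (α / 2 + β) γ with hγM | hγM
    · exact ⟨0, ⟨le_rfl, by positivity⟩, by rw [hT0, max_eq_left hγM]⟩
    · exact ⟨α / 2, ⟨by positivity, le_rfl⟩, by rw [hThalf, max_eq_right hγM]; ring⟩
  · rintro _ ⟨x, hx, rfl⟩
    exact hC.T2_le_of_mem_Icc hβ hγ hα.le hγα hx
  · rw [hT0, max_eq_left hγM]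
  · rw [hThalf, max_eq_right hγM]; ring
  · rw [← hL]
    exact (mem_image _ _ _).2 (hC.exists_T2_eq_max hβ hαβ hγα h3.le)
  · rintro _ ⟨x, -, rfl⟩
    rw [← hL]
    exact max_le (half_perimeter_le_T2 α β γ x) (hC.le_T2 hβ.ne' hγ.ne' x)

/-- Case `γ ≥ α ≥ β`, Configuration 2: the maximum of `T₂` over `[0, α/2]` is
`α/2 + max {γ, α/2 + β}` (attained at `x = 0` when `γ ≥ α/2 + β` and at
`x = α/2` when `γ ≤ α/2 + β`), and the minimum of `T₂` over `[0, α/2]` is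
`max {(α + β + γ)/2, ((α + γ)² − β² + 4√3·τ)/(4γ)}`, where `τ` is the area of
the triangle. -/
theorem stmt17 (α β γ : ℝ) (hα : 0 < α) (hβ : 0 < β) (hγ : 0 < γ)
    (h1 : α < β + γ) (h2 : β < α + γ) (h3 : γ < α + β)
    (h4 : α ^ 2 ≤ β ^ 2 + γ ^ 2) (h5 : β ^ 2 ≤ α ^ 2 + γ ^ 2)
    (h6 : γ ^ 2 ≤ α ^ 2 + β ^ 2)
    (hγα : α ≤ γ) (hαβ : β ≤ α)
    (τ : ℝ)
    (hτ : τ = (1/4) * Real.sqrt ((α + β + γ) * (-α + β + γ) * (α - β + γ) * (α + β - γ))) :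
    IsGreatest (T2 α β γ '' Icc 0 (α / 2)) (α / 2 + max γ (α / 2 + β)) ∧
      (α / 2 + β ≤ γ → T2 α β γ 0 = α / 2 + max γ (α / 2 + β)) ∧
      (γ ≤ α / 2 + β → T2 α β γ (α / 2) = α / 2 + max γ (α / 2 + β)) ∧
      IsLeast (T2 α β γ '' Icc 0 (α / 2))
        (max ((α + β + γ) / 2) (((α + γ) ^ 2 - β ^ 2 + 4 * Real.sqrt 3 * τ) / (4 * γ))) :=
  stmt17_general α β γ hα hβ hγ h1 h2 h3 hγα hαβ τ hτ
end
end

section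
/- Assume γ ≥ β ≥ α. Then the maximum of T₂ over the interval [0, α/2] equals α/2 + max{γ, α/2 + β} (attained at x = 0 when γ ≥ α/2 + β and at x = α/2 when γ ≤ α/2 + β), and the minimum of T₂ over [0, α/2] equals (α + β + γ)/2, attained at x = (γ − β)/2. -/
open Set

noncomputable section

/-!
Since `α ≤ β ≤ γ`, the angle at `A` is at most `60°`, i.e. `cos A ≥ 1/2`. For such an angle
the third side `√(b² + t² − 2bt cos A)` of a triangle with sides `b, t` never exceeds
`max b t`, so `CR₁(x) ≤ max {β, γ − 2x}` and `T₂(x) = α/2 + max {x + β, γ − x}` on `[0, α/2]`.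
This piecewise linear function is largest at an endpoint and smallest where
`x + β = γ − x`, i.e. at `x = (γ − β)/2`, which lies in `[0, α/2]` by `γ < α + β`.
-/

theorem sqrt_sq_add_sq_sub_mul_le_max {b t c : ℝ} (hb : 0 ≤ b) (ht : 0 ≤ t) (hc : 1 / 2 ≤ c) :
    √(b ^ 2 + t ^ 2 - 2 * b * t * c) ≤ max b t := by
  rw [Real.sqrt_le_iff]
  refine ⟨le_max_of_le_left hb, ?_⟩
  have hbt : b * t ≤ 2 * b * t * c := by nlinarith [mul_nonneg hb ht]
  rcases le_total b t with h | h
  · rw [max_eq_right h]; nlinarith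
  · rw [max_eq_left h]; nlinarith

theorem half_le_cosA {α β γ : ℝ} (hβ : 0 < β) (hγβ : β ≤ γ) (hβα : α ≤ β) (hα : 0 ≤ α) :
    1 / 2 ≤ (β ^ 2 + γ ^ 2 - α ^ 2) / (2 * β * γ) := by
  rw [le_div_iff₀ (by nlinarith)]
  nlinarith

theorem CR1_le_max {α β γ x : ℝ} (hα : 0 ≤ α) (hβ : 0 < β) (hγβ : β ≤ γ) (hβα : α ≤ β)
    (hx : 2 * x ≤ γ) : CR1 α β γ x ≤ max β (γ - 2 * x) :=
  sqrt_sq_add_sq_sub_mul_le_max hβ.le (by linarith) (half_le_cosA hβ hγβ hβα hα)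

theorem T2_eq_of_mem_Icc {α β γ x : ℝ} (hβ : 0 < β) (hγβ : β ≤ γ) (hβα : α ≤ β)
    (hx : x ∈ Icc 0 (α / 2)) : T2 α β γ x = α / 2 + max (x + β) (γ - x) := by
  have hα : 0 ≤ α := by linarith [hx.1, hx.2]
  rw [T2, max_eq_right (CR1_le_max hα hβ hγβ hβα (by linarith [hx.2])), add_assoc,
    add_max]
  ring_nf

theorem stmt18_general (α β γ : ℝ) (hα : 0 < α) (hβ : 0 < β)
    (h3 : γ < α + β) (hγβ : β ≤ γ) (hβα : α ≤ β) :
    IsGreatest (T2 α β γ '' Icc 0 (α / 2)) (α / 2 + max γ (α / 2 + β)) ∧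
      (α / 2 + β ≤ γ → T2 α β γ 0 = α / 2 + max γ (α / 2 + β)) ∧
      (γ ≤ α / 2 + β → T2 α β γ (α / 2) = α / 2 + max γ (α / 2 + β)) ∧
      IsLeast (T2 α β γ '' Icc 0 (α / 2)) ((α + β + γ) / 2) ∧
      (γ - β) / 2 ∈ Icc 0 (α / 2) ∧
      T2 α β γ ((γ - β) / 2) = (α + β + γ) / 2 := by
  have hT := fun x (hx : x ∈ Icc 0 (α / 2)) ↦ T2_eq_of_mem_Icc hβ hγβ hβα hx
  have h0 : (0 : ℝ) ∈ Icc 0 (α / 2) := ⟨le_rfl, by linarith⟩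
  have hhalf : α / 2 ∈ Icc 0 (α / 2) := ⟨by linarith, le_rfl⟩
  have hmid : (γ - β) / 2 ∈ Icc 0 (α / 2) := ⟨by linarith, by linarith⟩
  have hT0 : T2 α β γ 0 = α / 2 + γ := by
    rw [hT 0 h0, max_eq_right (by linarith)]; ring
  have hThalf : T2 α β γ (α / 2) = α / 2 + (α / 2 + β) := by
    rw [hT _ hhalf, max_eq_left (by linarith), add_comm (α / 2) β]
  have hTmid : T2 α β γ ((γ - β) / 2) = (α + β + γ) / 2 := by
    rw [hT _ hmid, max_eq_left (by linarith)]; ring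
  refine ⟨⟨?_, ?_⟩, fun h ↦ by rw [hT0, max_eq_left h], fun h ↦ by rw [hThalf, max_eq_right h],
    ⟨⟨_, hmid, hTmid⟩, ?_⟩, hmid, hTmid⟩
  · rcases le_total γ (α / 2 + β) with h | h
    · exact ⟨α / 2, hhalf, by rw [hThalf, max_eq_right h]⟩
    · exact ⟨0, h0, by rw [hT0, max_eq_left h]⟩
  · rintro _ ⟨x, hx, rfl⟩
    rw [hT x hx, max_comm γ]
    gcongr
    · linarith [hx.2]
    · linarith [hx.1]
  · rintro _ ⟨x, hx, rfl⟩
    rw [hT x hx]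
    linarith [le_max_left (x + β) (γ - x), le_max_right (x + β) (γ - x)]

/-- Case `γ ≥ β ≥ α`, Configuration 2: the maximum of `T₂` over `[0, α/2]` is
`α/2 + max {γ, α/2 + β}` (attained at `x = 0` when `γ ≥ α/2 + β` and at
`x = α/2` when `γ ≤ α/2 + β`), and the minimum of `T₂` over `[0, α/2]` is
`(α + β + γ)/2`, attained at `x = (γ − β)/2`. -/
theorem stmt18 (α β γ : ℝ) (hα : 0 < α) (hβ : 0 < β) (hγ : 0 < γ)
    (h1 : α < β + γ) (h2 : β < α + γ) (h3 : γ < α + β)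
    (h4 : α ^ 2 ≤ β ^ 2 + γ ^ 2) (h5 : β ^ 2 ≤ α ^ 2 + γ ^ 2)
    (h6 : γ ^ 2 ≤ α ^ 2 + β ^ 2)
    (hγβ : β ≤ γ) (hβα : α ≤ β) :
    IsGreatest (T2 α β γ '' Icc 0 (α / 2)) (α / 2 + max γ (α / 2 + β)) ∧
      (α / 2 + β ≤ γ → T2 α β γ 0 = α / 2 + max γ (α / 2 + β)) ∧
      (γ ≤ α / 2 + β → T2 α β γ (α / 2) = α / 2 + max γ (α / 2 + β)) ∧
      IsLeast (T2 α β γ '' Icc 0 (α / 2)) ((α + β + γ) / 2) ∧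
      (γ - β) / 2 ∈ Icc 0 (α / 2) ∧
      T2 α β γ ((γ - β) / 2) = (α + β + γ) / 2 :=
  stmt18_general α β γ hα hβ h3 hγβ hβα
end
end
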